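/- arXiv:2407.01387 — 2 statements merged into one kernel-verified Lean document; each statement's English description precedes it below -/
import Mathlib

section
/- Fix r ≥ 1 and work in the ring of formal power series in t over the polynomial ring ℚ[p₀,…,p_{r−1},x]. For an r-coloured permutation a of length n, let Φ(a) = p^{col(a)} x^{comaj(a)} t^{des(a)} / ((1−t)(1−xt)⋯(1−xⁿt)), where p^{col(a)} = p₀^{col₀(a)}⋯p_{r−1}^{col_{r−1}(a)} and each factor 1/(1−x^i t) denotes the power series Σ_{k≥0} x^{ik} t^k. Then for all symbol-disjoint r-coloured permutations a and b, Φ(a) *_t Φ(b) = Σ_{c ∈ a⧢b} Φ(c), where *_t is the Hadamard product in t and the sum is over the multiset of shuffles. -/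
open scoped Classical

noncomputable section

/-- A coloured permutation: a list of (symbol, colour) pairs. -/
abbrev CPerm : Type := List (ℕ × ℕ)

/-- `a` is a genuine coloured permutation: distinct, positive symbols. -/
def IsCPerm (a : CPerm) : Prop :=
  (a.map Prod.fst).Nodup ∧ ∀ p ∈ a, 0 < p.1

/-- The colour order on coloured integers: `p < q` iff the colour of `p` is bigger
(as an integer), or the colours agree and the symbol of `p` is smaller. -/
def cLt (p q : ℕ × ℕ) : Prop :=
  q.2 < p.2 ∨ (p.2 = q.2 ∧ p.1 < q.1)

instance : DecidableRel cLt := fun p q => by unfold cLt; infer_instance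

/-- The descent set of a coloured permutation (positions `0,…,n−1`; position `i ≥ 1`
is a descent iff the `(i+1)`-st entry is smaller than the `i`-th entry (1-indexed)
in the colour order; `0` is a descent iff the first colour is nonzero). -/
def DesSet (a : CPerm) : Finset ℕ :=
  (Finset.range a.length).filter fun i =>
    if i = 0 then (a.getD 0 (0, 0)).2 ≠ 0
    else cLt (a.getD i (0, 0)) (a.getD (i - 1) (0, 0))

/-- Descent number. -/
def des (a : CPerm) : ℕ := (DesSet a).card

/-- Comajor index. -/
def comaj (a : CPerm) : ℕ := ∑ i ∈ DesSet a, (a.length - i)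

/-- `colVec a j` is the number of entries of `a` of colour `j`. -/
def colVec (a : CPerm) (j : ℕ) : ℕ := (a.map Prod.snd).count j

/-- The multiset of shuffles of two lists. -/
def shuffles {α : Type*} : List α → List α → Multiset (List α)
  | [], bs => {bs}
  | a :: as, [] => {a :: as}
  | a :: as, b :: bs =>
      ((shuffles as (b :: bs)).map (a :: ·)) + ((shuffles (a :: as) bs).map (b :: ·))
  termination_by as bs => as.length + bs.length

/-- The set of symbols of a coloured permutation. -/
def symbols (a : CPerm) : Finset ℕ := (a.map Prod.fst).toFinset

/-- The set of nonzero colours of a coloured permutation. -/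
def paletteStar (a : CPerm) : Finset ℕ := ((a.map Prod.snd).toFinset).erase 0

/-- Two coloured permutations are symbol-disjoint if they share no symbols. -/
def SymbolDisjoint (a b : CPerm) : Prop := Disjoint (symbols a) (symbols b)

/-- `a` is `r`-coloured: all colours lie in `{0,…,r−1}`. -/
def RColoured (r : ℕ) (a : CPerm) : Prop := ∀ p ∈ a, p.2 < r

/-- Symbols of a coloured configuration (= multiset of coloured permutations). -/
def msymbols (f : Multiset CPerm) : Finset ℕ := (f.map symbols).sup

/-- `palette*` of a coloured configuration. -/
def mpalette (f : Multiset CPerm) : Finset ℕ := (f.map paletteStar).sup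

/-- The shuffle of two coloured configurations (bi-additive extension). -/
def mshuffle (f g : Multiset CPerm) : Multiset CPerm :=
  f.bind fun a => g.bind fun b => shuffles a b

/-- Hadamard product of formal power series. -/
def hadamard {R : Type*} [Semiring R] (A B : PowerSeries R) : PowerSeries R :=
  PowerSeries.mk fun k => (PowerSeries.coeff k) A * (PowerSeries.coeff k) B

/-- The geometric series `1/(1 − c·Y) = Σ_k c^k Y^k`. -/
def geom {R : Type*} [Semiring R] (c : R) : PowerSeries R :=
  PowerSeries.mk fun k => c ^ k

/-- The field ℚ(X) of rational functions. -/
abbrev K : Type := RatFunc ℚ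

/-- The variable X of ℚ(X). -/
def XX : K := RatFunc.X

/-- Membership in `U = {±X^k : k ∈ ℤ}`. -/
def InU (u : K) : Prop := ∃ k : ℤ, u = XX ^ k ∨ u = -XX ^ k

/-- `α(a) = Π_i α(γ_i)`. -/
def alphaProd (α : ℕ → K) (a : CPerm) : K := (a.map fun p => α p.2).prod

/-- The summand of `W^ε_{f,α}` corresponding to a single coloured permutation. -/
def Wterm (ε : ℤ) (α : ℕ → K) (a : CPerm) : PowerSeries K :=
  PowerSeries.C (alphaProd α a * XX ^ (ε * (comaj a : ℤ))) * PowerSeries.X ^ des a *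
    ∏ i ∈ Finset.range (a.length + 1), geom (XX ^ (ε * (i : ℤ)))

/-- `W^ε_{f,α} = Σ_a f_a α(a) X^{ε·comaj(a)} Y^{des(a)} / ((1−Y)⋯(1−X^{ε|a|}Y))`. -/
def W (ε : ℤ) (α : ℕ → K) (f : Multiset CPerm) : PowerSeries K :=
  (f.map (Wterm ε α)).sum

/-- `(f,α)` is a labelled coloured configuration. -/
def IsLCC (f : Multiset CPerm) (α : ℕ → K) : Prop :=
  (∀ a ∈ f, IsCPerm a) ∧ (∀ c, InU (α c)) ∧ (∀ c ∉ mpalette f, α c = 1)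


/-- The polynomial ring `ℚ[p₀,p₁,…][x]` (only `p₀,…,p_{r−1}` occur for `r`-coloured
permutations); `x` is `Polynomial.X` and `p_j` is `MvPolynomial.X j`. -/
abbrev PXRing : Type := Polynomial (MvPolynomial ℕ ℚ)

/-- The monomial `p^{col(a)} = p₀^{col₀(a)} ⋯`. -/
def pMon (a : CPerm) : MvPolynomial ℕ ℚ := (a.map fun p => MvPolynomial.X p.2).prod

/-- `Φ(a) = p^{col(a)} x^{comaj(a)} t^{des(a)} / ((1−t)(1−xt)⋯(1−xⁿt))`. -/
def Phi (a : CPerm) : PowerSeries PXRing :=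
  PowerSeries.C (Polynomial.C (pMon a) * Polynomial.X ^ comaj a) *
    PowerSeries.X ^ des a *
    ∏ i ∈ Finset.range (a.length + 1), geom ((Polynomial.X : PXRing) ^ i)

/-!
A coloured permutation `c` of length `n` has `[tᵏ] Φ(c) = p^{col(c)} · Σ x^{v₁+⋯+vₙ}`, summed
over `0 ≤ v₁ ≤ ⋯ ≤ vₙ ≤ k` with `vᵢ < vᵢ₊₁` whenever `i` is a descent (and `0 < v₁` when `0` is):
the factor `x^{comaj} t^{des}` accounts for the forced increments and `1/((1−t)⋯(1−xⁿt))` for the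
free ones. A pair of such sequences for `a` and `b` merges, sorting by value and breaking ties by
the colour order, into a unique shuffle `c` of `a` and `b` together with a sequence for `c`; since
`a` and `b` share no letters, this is a bijection. Hence the product of the `tᵏ`-coefficients of
`Φ(a)` and `Φ(b)` is the sum of those of `Φ(c)`. The bijection is built by induction on `a` and
`b`, comparing the values attached to their first letters.
-/

open Finset PowerSeries

lemma sum_Icc_sum_Icc_add_sum_Icc_sum_Icc {M : Type*} [AddCommMonoid M] {A B d₁ d₂ k : ℕ}
    (hd : d₁ + d₂ = 1) (hB : B ≤ A + d₁) (hA : A ≤ B + d₂) (G : ℕ → ℕ → M) :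
    (∑ v ∈ Icc A k, ∑ u ∈ Icc (v + d₁) k, G v u) + ∑ u ∈ Icc B k, ∑ v ∈ Icc (u + d₂) k, G v u
      = ∑ v ∈ Icc A k, ∑ u ∈ Icc B k, G v u := by
  rw [add_comm,
    sum_comm' (t' := Icc A k) (s' := fun v => (Icc B k).filter fun u => ¬ v + d₁ ≤ u),
    ← sum_add_distrib]
  · refine sum_congr rfl fun v hv => ?_
    have upper : Icc (v + d₁) k = (Icc B k).filter fun u => v + d₁ ≤ u := by
      ext u
      simp only [mem_Icc, mem_filter] at hv ⊢
      omega
    rw [upper, sum_filter_not_add_sum_filter]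
  · intro u v
    simp only [mem_Icc, mem_filter]
    omega

lemma perm_of_mem_shuffles {α : Type*} {a b c : List α} (hc : c ∈ shuffles a b) :
    c.Perm (a ++ b) := by
  induction a generalizing b c with
  | nil => simp_all [shuffles]
  | cons e a iha =>
    induction b generalizing c with
    | nil => simp_all [shuffles]
    | cons f b ihb =>
      rw [shuffles, Multiset.mem_add, Multiset.mem_map, Multiset.mem_map] at hc
      rcases hc with ⟨c, hc, rfl⟩ | ⟨c, hc, rfl⟩
      · exact (iha hc).cons e
      · exact ((ihb hc).cons f).trans List.perm_middle.symm

def desStep (p e : ℕ × ℕ) : ℕ := if cLt e p then 1 else 0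

lemma desStep_le_add (p e f : ℕ × ℕ) : desStep p f ≤ desStep p e + desStep e f := by
  unfold desStep
  split_ifs <;> simp only [cLt] at * <;> omega

lemma desStep_add_desStep {e f : ℕ × ℕ} (h : e ≠ f) : desStep e f + desStep f e = 1 := by
  have h' : e.1 ≠ f.1 ∨ e.2 ≠ f.2 := by
    by_contra! hc
    exact h (Prod.ext hc.1 hc.2)
  unfold desStep
  split_ifs <;> simp only [cLt] at * <;> omega

/-- `Σ w (n - i)` over the descents `i` of `c`, with `p` standing before the first letter of `c`. -/
def desSum (w : ℕ → ℕ) : ℕ × ℕ → CPerm → ℕ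
  | _, [] => 0
  | p, e :: c => desStep p e * w (c.length + 1) + desSum w e c

lemma sum_range_desStep_getD (w : ℕ → ℕ) (p : ℕ × ℕ) (c : CPerm) :
    ∑ i ∈ range c.length, desStep ((p :: c).getD i (0, 0)) (c.getD i (0, 0)) * w (c.length - i)
      = desSum w p c := by
  induction c generalizing p with
  | nil => rfl
  | cons e c ih =>
    rw [List.length_cons, sum_range_succ', desSum, ← ih e, add_comm]
    simp

/-- The descent at position `0` is a descent from the sentinel letter `0⁰ = (0, 0)`. -/
lemma desSet_eq_filter (c : CPerm) :
    DesSet c = (range c.length).filter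
      fun i => desStep (((0, 0) :: c).getD i (0, 0)) (c.getD i (0, 0)) = 1 := by
  refine filter_congr fun i _ => ?_
  rcases i with _ | i
  · simp [desStep, cLt, Nat.pos_iff_ne_zero]
  · simp [desStep]

lemma sum_desSet_eq_desSum (w : ℕ → ℕ) (c : CPerm) :
    ∑ i ∈ DesSet c, w (c.length - i) = desSum w (0, 0) c := by
  rw [← sum_range_desStep_getD, desSet_eq_filter, sum_filter]
  refine sum_congr rfl fun i _ => ?_
  unfold desStep; split_ifs <;> simp_all

lemma des_eq_desSum (c : CPerm) : des c = desSum 1 (0, 0) c := by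
  rw [des, card_eq_sum_ones, sum_desSet_eq_desSum (fun _ => 1)]; rfl

lemma comaj_eq_desSum (c : CPerm) : comaj c = desSum id (0, 0) c :=
  sum_desSet_eq_desSum id c

section CompatSum

variable {R : Type*} [CommSemiring R]

def geomProd (x : R) (n : ℕ) : R⟦X⟧ := ∏ i ∈ range n, geom (x ^ i)

lemma geomProd_succ (x : R) (n : ℕ) : geomProd x (n + 1) = geomProd x n * geom (x ^ n) :=
  prod_range_succ _ n

lemma coeff_geom_mul_X_pow_mul (y : R) (F : R⟦X⟧) (m k : ℕ) :
    coeff k (geom y * (X ^ m * F)) =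
      ∑ s ∈ range (k + 1 - m), y ^ s * coeff k (X ^ (m + s) * F) := by
  have shift : ∀ s ∈ range (k + 1),
      coeff s (geom y) * coeff (k - s) (X ^ m * F) = y ^ s * coeff k (X ^ (m + s) * F) := by
    intro s hs
    rw [geom, coeff_mk, add_comm m s, pow_add, mul_assoc, coeff_X_pow_mul' _ s k,
      if_pos (Nat.lt_succ_iff.mp (mem_range.mp hs))]
  rw [coeff_mul, Nat.sum_antidiagonal_eq_sum_range_succ (fun i j => coeff i (geom y) * coeff j _),
    sum_congr rfl shift]
  refine (sum_subset (range_subset_range.2 (Nat.sub_le _ _)) fun s _ hs => ?_).symm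
  rw [coeff_X_pow_mul', if_neg (by simp only [mem_range] at hs; omega), mul_zero]

/-- The sum of `x ^ (v₁ + ⋯ + vₙ)` over `lo = v₀ ≤ v₁ ≤ ⋯ ≤ vₙ ≤ k` with `vᵢ₋₁ < vᵢ` whenever
`cᵢ < cᵢ₋₁` in the colour order, for `c = c₁ ⋯ cₙ` and `c₀ = p`. -/
def compatSum (x : R) (k : ℕ) : ℕ × ℕ → ℕ → CPerm → R
  | _, _, [] => 1
  | p, lo, e :: c => ∑ v ∈ Icc (lo + desStep p e) k, x ^ v * compatSum x k e v c

lemma compatSum_eq (x : R) {k lo : ℕ} (hlo : lo ≤ k) (p : ℕ × ℕ) (c : CPerm) :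
    compatSum x k p lo c = x ^ (lo * c.length + desSum id p c) *
      coeff k (X ^ (lo + desSum 1 p c) * geomProd x (c.length + 1)) := by
  induction c generalizing p lo with
  | nil => simp [compatSum, desSum, geomProd, geom, coeff_X_pow_mul', hlo]
  | cons e c ih =>
    obtain ⟨m, hm⟩ : ∃ m, m = lo + desStep p e := ⟨_, rfl⟩
    have term : ∀ s ∈ range (k + 1 - m), x ^ (m + s) * compatSum x k e (m + s) c
        = x ^ (m * (c.length + 1) + desSum id e c) * ((x ^ (c.length + 1)) ^ s *
            coeff k (X ^ (m + s) * (X ^ desSum 1 e c * geomProd x (c.length + 1)))) := by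
      intro s hs
      rw [ih (by simp only [mem_range] at hs; omega), ← mul_assoc (X ^ (m + s)), ← pow_add]
      ring
    have series :
        geom (x ^ (c.length + 1)) * (X ^ m * (X ^ desSum 1 e c * geomProd x (c.length + 1)))
          = X ^ (lo + desSum 1 p (e :: c)) * geomProd x ((e :: c).length + 1) := by
      rw [List.length_cons, geomProd_succ x (c.length + 1), desSum, Pi.one_apply, mul_one,
        ← add_assoc, ← hm, pow_add]
      ring
    calc compatSum x k p lo (e :: c)
        = ∑ s ∈ range (k + 1 - m), x ^ (m + s) * compatSum x k e (m + s) c := by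
          rw [compatSum, ← hm, ← Ico_add_one_right_eq_Icc, sum_Ico_eq_sum_range]
      _ = x ^ (m * (c.length + 1) + desSum id e c) *
            coeff k (geom (x ^ (c.length + 1)) *
              (X ^ m * (X ^ desSum 1 e c * geomProd x (c.length + 1)))) := by
          rw [sum_congr rfl term, ← mul_sum, coeff_geom_mul_X_pow_mul]
      _ = _ := by
          rw [series]
          simp only [desSum, id_eq, List.length_cons, hm]
          ring

lemma sum_map_compatSum_cons (x : R) (k : ℕ) (p e : ℕ × ℕ) (lo : ℕ) (s : Multiset CPerm) :
    (s.map fun c => compatSum x k p lo (e :: c)).sum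
      = ∑ v ∈ Icc (lo + desStep p e) k, x ^ v * (s.map (compatSum x k e v)).sum := by
  simp only [compatSum, Multiset.sum_map_sum, Multiset.sum_map_mul_left]

theorem sum_map_shuffles_compatSum (x : R) (k : ℕ) {a b : CPerm} (hab : a.Disjoint b)
    (p : ℕ × ℕ) (lo : ℕ) :
    ((shuffles a b).map (compatSum x k p lo)).sum
      = compatSum x k p lo a * compatSum x k p lo b := by
  induction a generalizing b p lo with
  | nil => simp [shuffles, compatSum]
  | cons e a iha =>
    induction b generalizing p lo with
    | nil => simp [shuffles, compatSum]
    | cons f b ihb =>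
      have hef : e ≠ f := fun h => hab List.mem_cons_self (h ▸ List.mem_cons_self)
      have ha : a.Disjoint (f :: b) := fun _ h => hab (List.mem_cons_of_mem e h)
      have hb : (e :: a).Disjoint b := fun _ h h' => hab h (List.mem_cons_of_mem f h')
      rw [shuffles, Multiset.map_add, Multiset.sum_add, Multiset.map_map, Multiset.map_map,
        Function.comp_def, Function.comp_def, sum_map_compatSum_cons, sum_map_compatSum_cons]
      simp only [iha ha, ihb hb]
      calc _ = (∑ v ∈ Icc (lo + desStep p e) k, ∑ u ∈ Icc (v + desStep e f) k,
                x ^ v * compatSum x k e v a * (x ^ u * compatSum x k f u b)) +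
              ∑ u ∈ Icc (lo + desStep p f) k, ∑ v ∈ Icc (u + desStep f e) k,
                x ^ v * compatSum x k e v a * (x ^ u * compatSum x k f u b) := by
            simp only [compatSum, mul_sum, sum_mul]
            congr 1 <;> exact sum_congr rfl fun _ _ => sum_congr rfl fun _ _ => by ring
        -- A pair of first values `(v, u)` is realised by exactly one shuffle: the one starting
        -- with `e` iff `v + desStep e f ≤ u`.
        _ = ∑ v ∈ Icc (lo + desStep p e) k, ∑ u ∈ Icc (lo + desStep p f) k,
                x ^ v * compatSum x k e v a * (x ^ u * compatSum x k f u b) := by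
            have hpef := desStep_le_add p e f
            have hpfe := desStep_le_add p f e
            exact sum_Icc_sum_Icc_add_sum_Icc_sum_Icc (desStep_add_desStep hef) (by omega)
              (by omega) _
        _ = _ := by simp only [compatSum, sum_mul_sum]

end CompatSum

lemma coeff_Phi (c : CPerm) (k : ℕ) :
    coeff k (Phi c) = Polynomial.C (pMon c) * compatSum Polynomial.X k (0, 0) 0 c := by
  rw [compatSum_eq _ (Nat.zero_le k), ← des_eq_desSum, ← comaj_eq_desSum, Phi, mul_assoc,
    coeff_C_mul, zero_mul, zero_add, zero_add, mul_assoc]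
  rfl

lemma pMon_of_mem_shuffles {a b c : CPerm} (hc : c ∈ shuffles a b) :
    pMon c = pMon a * pMon b := by
  rw [pMon, pMon, pMon, ← List.prod_append, ← List.map_append]
  exact ((perm_of_mem_shuffles hc).map _).prod_eq

lemma SymbolDisjoint.disjoint {a b : CPerm} (h : SymbolDisjoint a b) : a.Disjoint b :=
  fun _ ha hb => Finset.disjoint_left.mp h (List.mem_toFinset.mpr (List.mem_map_of_mem ha))
    (List.mem_toFinset.mpr (List.mem_map_of_mem hb))

theorem hadamard_Phi_eq_sum_shuffles_general (a b : CPerm) (hd : SymbolDisjoint a b) :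
    hadamard (Phi a) (Phi b) = ((shuffles a b).map Phi).sum := by
  ext1 k
  have hpMon : ∀ c ∈ shuffles a b, Polynomial.C (pMon c) * compatSum Polynomial.X k (0, 0) 0 c
      = Polynomial.C (pMon a * pMon b) * compatSum Polynomial.X k (0, 0) 0 c :=
    fun c hc => by rw [pMon_of_mem_shuffles hc]
  rw [hadamard, coeff_mk, map_multiset_sum, Multiset.map_map, Function.comp_def]
  simp only [coeff_Phi]
  rw [Multiset.map_congr rfl hpMon, Multiset.sum_map_mul_left,
    sum_map_shuffles_compatSum _ _ hd.disjoint, map_mul]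
  ring

/-- **Theorem.** For symbol-disjoint `r`-coloured permutations `a, b`:
`Φ(a) *_t Φ(b) = Σ_{c ∈ a⧢b} Φ(c)`. -/
theorem hadamard_Phi_eq_sum_shuffles (r : ℕ) (hr : 1 ≤ r) (a b : CPerm)
    (ha : IsCPerm a) (hb : IsCPerm b)
    (hra : RColoured r a) (hrb : RColoured r b)
    (hd : SymbolDisjoint a b) :
    hadamard (Phi a) (Phi b) = ((shuffles a b).map Phi).sum :=
  hadamard_Phi_eq_sum_shuffles_general a b hd
end
end

section
/- Fix r ≥ 1, and work in the ring of formal power series over ℚ in the countably many commuting variables x_i^{(j)} (i a positive integer, 0 ≤ j ≤ r−1). For an r-coloured permutation a = σ₁^{γ₁}⋯σ_n^{γ_n}, let F_a be the coloured quasisymmetric function F_a = Σ x_{i₁}^{(γ₁)} x_{i₂}^{(γ₂)} ⋯ x_{i_n}^{(γ_n)}, the sum over all sequences 1 ≤ i₁ ≤ i₂ ≤ ⋯ ≤ i_n with i_j < i_{j+1} whenever j ∈ Des(a) ∖ {0}. Then for all symbol-disjoint r-coloured permutations a and b, F_a · F_b = Σ_{c ∈ a⧢b} F_c, the sum over the multiset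 of shuffles of a and b; equivalently, writing F_A for the common value of F_a over all a with sDes(a) = A, one has F_A F_B = Σ_C ν_{A,B}^C F_C, where ν_{A,B}^C is the number of shuffles c ∈ a⧢b with sDes(c) = C. -/
/-!
When the symbols of `c` are distinct, a sequence `1 ≤ i₁ ≤ ⋯ ≤ iₙ`, strict at the descents of `c`,
is the same as a choice of indices making the labelled entries `(iⱼ, cⱼ)` strictly increasing
lexicographically (first by index, then in the colour order). Sorting the labelled entries of a
pair of such labellings of `a` and `b` therefore yields a labelling of exactly one shuffle of `a`
and `b`. Formally this is an induction on first letters: the smaller of the two first labelled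
entries is the first letter of the shuffle. It is carried out on polynomial truncations, with a
lower bound on the labelled entries as extra parameter.
-/

open scoped Classical

noncomputable section

/-- The largest index `i` occurring in a monomial of the variables `x_i^{(j)}`
(variables are indexed by pairs `(i, j)`). -/
def monBound (m : (ℕ × ℕ) →₀ ℕ) : ℕ := m.support.sup fun p => p.1

/-- The coloured quasisymmetric function `F_a` of a coloured permutation `a`
of length `n`, as a formal power series in the variables `x_i^{(j)}` (indexed by
pairs `(i,j)`, `i ≥ 1`): its coefficient at a monomial `m` counts the sequences
`1 ≤ i₁ ≤ ⋯ ≤ i_n` (encoded as `v : Fin n → Fin (monBound m + 1)`) which increase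
strictly at each descent in `Des(a) ∖ {0}` and satisfy
`x_{i₁}^{(γ₁)} ⋯ x_{i_n}^{(γ_n)} = m`. -/
def FQ (a : CPerm) : MvPowerSeries (ℕ × ℕ) ℚ := fun m =>
  ((Finset.univ.filter (fun v : Fin a.length → Fin (monBound m + 1) =>
      (∀ j, 1 ≤ (v j : ℕ)) ∧
      (∀ j k, j ≤ k → (v j : ℕ) ≤ (v k : ℕ)) ∧
      (∀ j k : Fin a.length, (k : ℕ) = (j : ℕ) + 1 → (j : ℕ) + 1 ∈ DesSet a →
        (v j : ℕ) < (v k : ℕ)) ∧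
      (∑ j : Fin a.length,
        Finsupp.single (((v j : ℕ)), (a.getD (j : ℕ) (0, 0)).2) 1) = m)).card : ℚ)

section

open Finset MvPolynomial

lemma cLt_asymm {p q : ℕ × ℕ} (h : cLt p q) : ¬cLt q p := by
  unfold cLt at *; omega

lemma cLt_or_cLt_of_fst_ne {p q : ℕ × ℕ} (h : p.1 ≠ q.1) : cLt p q ∨ cLt q p := by
  unfold cLt; omega

/-- The order on labelled entries `(i, σ^γ)`, the entry `σ^γ` carrying the variable `x_i^{(γ)}`. -/
def LabelLt : ℕ × (ℕ × ℕ) → ℕ × (ℕ × ℕ) → Prop := Prod.Lex (· < ·) cLt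

lemma labelLt_iff {p q : ℕ × (ℕ × ℕ)} : LabelLt p q ↔ p.1 < q.1 ∨ p.1 = q.1 ∧ cLt p.2 q.2 :=
  Prod.lex_def

lemma labelLt_trans {p q s : ℕ × (ℕ × ℕ)} (h₁ : LabelLt p q) (h₂ : LabelLt q s) :
    LabelLt p s := by
  simp only [labelLt_iff, cLt] at *; omega

lemma labelLt_asymm {p q : ℕ × (ℕ × ℕ)} (h : LabelLt p q) : ¬LabelLt q p := by
  simp only [labelLt_iff, cLt] at *; omega

lemma labelLt_or_labelLt_of_ne {p q : ℕ × (ℕ × ℕ)} (h : p.2.1 ≠ q.2.1) :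
    LabelLt p q ∨ LabelLt q p := by
  simp only [labelLt_iff, cLt]; omega

instance : Trans LabelLt LabelLt LabelLt := ⟨labelLt_trans⟩

def labelledEntries (c : CPerm) (w : Fin c.length → ℕ) : List (ℕ × (ℕ × ℕ)) :=
  List.ofFn fun j => (w j, c.getD j (0, 0))

def IsLabelling (prev : Option (ℕ × (ℕ × ℕ))) (c : CPerm) (w : Fin c.length → ℕ) : Prop :=
  (prev.toList ++ labelledEntries c w).IsChain LabelLt

def labelMonomial (c : CPerm) (w : Fin c.length → ℕ) : (ℕ × ℕ) →₀ ℕ :=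
  ∑ j, Finsupp.single (w j, (c.getD j (0, 0)).2) 1

lemma isLabelling_cons {prev : Option (ℕ × (ℕ × ℕ))} {x : ℕ × ℕ} {c : CPerm} {t : ℕ}
    {u : Fin c.length → ℕ} :
    IsLabelling prev (x :: c) (Fin.cons t u) ↔
      (∀ q ∈ prev, LabelLt q (t, x)) ∧ IsLabelling (some (t, x)) c u := by
  cases prev <;> simp [IsLabelling, labelledEntries, List.ofFn_succ, List.isChain_cons_cons]

lemma labelMonomial_cons (x : ℕ × ℕ) (c : CPerm) (t : ℕ) (u : Fin c.length → ℕ) :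
    labelMonomial (x :: c) (Fin.cons t u) = Finsupp.single (t, x.2) 1 + labelMonomial c u := by
  simp [labelMonomial, Fin.sum_univ_succ]

lemma isLabelling_none_iff {c : CPerm} (hc : (c.map Prod.fst).Nodup) (w : Fin c.length → ℕ) :
    IsLabelling none c w ↔
      Monotone w ∧ ∀ j k : Fin c.length, (k : ℕ) = j + 1 → (j : ℕ) + 1 ∈ DesSet c → w j < w k := by
  have hne : ∀ i (hi : i + 1 < c.length), (c.getD i (0, 0)).1 ≠ (c.getD (i + 1) (0, 0)).1 := by
    intro i hi
    rw [List.getD_eq_getElem _ _ (by omega), List.getD_eq_getElem _ _ hi]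
    have := hc.getElem_inj_iff (i := i) (j := i + 1) (hi := by simp; omega) (hj := by simpa using hi)
    simpa using this.not.2 (by omega)
  have hdes : ∀ i (hi : i + 1 < c.length),
      i + 1 ∈ DesSet c ↔ cLt (c.getD (i + 1) (0, 0)) (c.getD i (0, 0)) := by
    intro i hi; simp [DesSet, hi]
  change (labelledEntries c w).IsChain LabelLt ↔ _
  constructor
  · intro H
    refine ⟨fun i j hij => ?_, fun j k hk hd => ?_⟩
    · rcases hij.lt_or_eq with h | rfl
      · have := List.pairwise_ofFn.1 H.pairwise h
        rw [labelLt_iff] at this; omega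
      · exact le_rfl
    · obtain ⟨k, hk'⟩ := k
      simp only at hk
      subst hk
      have := List.isChain_ofFn.1 H j hk'
      rw [labelLt_iff] at this
      exact this.resolve_right fun h => cLt_asymm h.2 ((hdes j hk').1 hd)
  · rintro ⟨hmono, hstrict⟩
    refine List.isChain_ofFn.2 fun i hi => ?_
    rw [labelLt_iff]
    by_cases hd : i + 1 ∈ DesSet c
    · exact Or.inl (hstrict ⟨i, _⟩ ⟨i + 1, hi⟩ rfl hd)
    · refine (hmono (Fin.mk_le_mk.2 (Nat.le_succ i))).lt_or_eq.imp_right fun h => ⟨h, ?_⟩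
      exact (cLt_or_cLt_of_fst_ne (hne i hi)).resolve_right ((hdes i hi).not.1 hd)

lemma monBound_mono {m m' : (ℕ × ℕ) →₀ ℕ} (h : m' ≤ m) : monBound m' ≤ monBound m :=
  Finset.sup_mono (Finsupp.support_mono h)

lemma le_monBound_of_labelMonomial_eq {c : CPerm} {w : Fin c.length → ℕ} {m : (ℕ × ℕ) →₀ ℕ}
    (h : labelMonomial c w = m) (j : Fin c.length) : w j ≤ monBound m := by
  apply Finset.le_sup (f := fun p : ℕ × ℕ => p.1) (b := (w j, (c.getD j (0, 0)).2))
  rw [Finsupp.mem_support_iff, ← h, labelMonomial, Finsupp.finsetSum_apply]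
  exact (Finset.sum_pos' (fun _ _ => Nat.zero_le _) ⟨j, mem_univ _, by simp⟩).ne'

lemma sum_piFinset_const_succ {α M : Type*} [AddCommMonoid M] {n : ℕ} (s : Finset α)
    (f : (Fin (n + 1) → α) → M) :
    ∑ w ∈ Fintype.piFinset (fun _ => s), f w =
      ∑ t ∈ s, ∑ u ∈ Fintype.piFinset (fun _ => s), f (Fin.cons t u) := by
  have := Finset.filter_piFinset_eq_map_consEquiv (fun _ : Fin (n + 1) => s) (fun _ => True)
  rw [Finset.filter_true_of_mem fun _ _ => trivial] at this
  rw [this, Finset.sum_map, Finset.sum_product]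
  simp only [Finset.filter_true]
  rfl

variable {R : Type*} [CommSemiring R]

lemma sum_mul_sum_eq_add {ι κ : Type*} (s : Finset ι) (t : Finset κ) (f : ι → R) (g : κ → R)
    (r : ι → κ → Prop) (r' : κ → ι → Prop) (hr : ∀ i j, r' j i ↔ ¬r i j) :
    (∑ i ∈ s, f i) * ∑ j ∈ t, g j =
      ∑ i ∈ s, f i * ∑ j ∈ t, (if r i j then g j else 0) +
        ∑ j ∈ t, g j * ∑ i ∈ s, (if r' j i then f i else 0) := by
  simp_rw [sum_mul_sum, mul_sum, mul_ite, mul_zero]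
  rw [sum_comm (s := t), ← sum_add_distrib]
  refine sum_congr rfl fun i _ => ?_
  rw [← sum_add_distrib]
  refine sum_congr rfl fun j _ => ?_
  by_cases h : r i j <;> simp [h, hr, mul_comm]

variable (B : ℕ)

/-- `F_c` with the variables `x_i^{(j)}`, `i > B`, set to zero, summed only over the labellings
whose labelled entries all lie above `prev`. -/
def truncFQ (prev : Option (ℕ × (ℕ × ℕ))) (c : CPerm) : MvPolynomial (ℕ × ℕ) R :=
  ∑ w ∈ Fintype.piFinset (fun _ => Icc 1 B) with IsLabelling prev c w,
    monomial (labelMonomial c w) 1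

lemma truncFQ_nil (prev : Option (ℕ × (ℕ × ℕ))) : (truncFQ B prev [] : MvPolynomial _ R) = 1 := by
  cases prev <;> simp [truncFQ, IsLabelling, labelledEntries, labelMonomial]

lemma truncFQ_cons (prev : Option (ℕ × (ℕ × ℕ))) (x : ℕ × ℕ) (c : CPerm) :
    (truncFQ B prev (x :: c) : MvPolynomial _ R) =
      ∑ t ∈ Icc 1 B with ∀ q ∈ prev, LabelLt q (t, x), X (t, x.2) * truncFQ B (some (t, x)) c := by
  rw [truncFQ, sum_filter]
  -- `Fin (x :: c).length` is `Fin (c.length + 1)` only up to unfolding `List.length`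
  erw [sum_piFinset_const_succ]
  rw [sum_filter]
  refine sum_congr rfl fun t _ => ?_
  by_cases h : ∀ q ∈ prev, LabelLt q (t, x)
  · simp only [if_pos h, isLabelling_cons, and_iff_right h, labelMonomial_cons,
      monomial_single_add, pow_one, truncFQ, sum_filter, mul_sum, mul_ite, mul_zero]
  · simp only [isLabelling_cons, iff_false_intro h, false_and, if_false,
      sum_const_zero]

lemma truncFQ_cons_of_labelLt {prev : Option (ℕ × (ℕ × ℕ))} {p : ℕ × (ℕ × ℕ)}
    (hp : ∀ q ∈ prev, LabelLt q p) (y : ℕ × ℕ) (c : CPerm) :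
    (truncFQ B (some p) (y :: c) : MvPolynomial _ R) =
      ∑ s ∈ Icc 1 B with ∀ q ∈ prev, LabelLt q (s, y),
        if LabelLt p (s, y) then X (s, y.2) * truncFQ B (some (s, y)) c else 0 := by
  rw [truncFQ_cons, ← sum_filter, filter_filter]
  refine sum_congr (filter_congr fun s _ => ?_) fun _ _ => rfl
  simp only [Option.mem_def, Option.some.injEq, forall_eq']
  exact ⟨fun h => ⟨fun q hq => labelLt_trans (hp q hq) h, h⟩, And.right⟩

lemma truncFQ_cons_mul_truncFQ_cons (prev : Option (ℕ × (ℕ × ℕ))) {x y : ℕ × ℕ}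
    (hxy : x.1 ≠ y.1) (a b : CPerm) :
    (truncFQ B prev (x :: a) * truncFQ B prev (y :: b) : MvPolynomial _ R) =
      ∑ t ∈ Icc 1 B with ∀ q ∈ prev, LabelLt q (t, x),
          X (t, x.2) * (truncFQ B (some (t, x)) a * truncFQ B (some (t, x)) (y :: b)) +
        ∑ s ∈ Icc 1 B with ∀ q ∈ prev, LabelLt q (s, y),
          X (s, y.2) * (truncFQ B (some (s, y)) (x :: a) * truncFQ B (some (s, y)) b) := by
  have hr : ∀ t s, LabelLt (s, y) (t, x) ↔ ¬LabelLt (t, x) (s, y) := fun t s =>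
    ⟨labelLt_asymm, (labelLt_or_labelLt_of_ne hxy).resolve_left⟩
  rw [truncFQ_cons, truncFQ_cons, sum_mul_sum_eq_add _ _ _ _ _ _ hr]
  congr 1 <;> refine sum_congr rfl fun t ht => ?_
  · rw [truncFQ_cons_of_labelLt B (mem_filter.1 ht).2, mul_assoc]
  · rw [truncFQ_cons_of_labelLt B (mem_filter.1 ht).2, mul_right_comm, mul_assoc]

lemma sum_map_truncFQ_cons (prev : Option (ℕ × (ℕ × ℕ))) (x : ℕ × ℕ) (M : Multiset CPerm) :
    (M.map fun c => (truncFQ B prev (x :: c) : MvPolynomial _ R)).sum =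
      ∑ t ∈ Icc 1 B with ∀ q ∈ prev, LabelLt q (t, x),
        X (t, x.2) * (M.map (truncFQ B (some (t, x)))).sum := by
  simp only [truncFQ_cons, Multiset.sum_map_sum, Multiset.sum_map_mul_left]

lemma symbols_cons (x : ℕ × ℕ) (c : CPerm) : symbols (x :: c) = insert x.1 (symbols c) := by
  simp [symbols]

theorem truncFQ_mul_truncFQ (prev : Option (ℕ × (ℕ × ℕ))) (a b : CPerm)
    (hab : SymbolDisjoint a b) :
    (truncFQ B prev a * truncFQ B prev b : MvPolynomial _ R) =
      ((shuffles a b).map (truncFQ B prev)).sum := by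
  induction a, b using shuffles.induct generalizing prev with
  | case1 b => simp [shuffles, truncFQ_nil]
  | case2 x a => simp [shuffles, truncFQ_nil]
  | case3 x a y b ih₁ ih₂ =>
    rw [SymbolDisjoint, symbols_cons, symbols_cons] at hab
    have hxy : x.1 ≠ y.1 := fun h =>
      disjoint_left.1 hab (mem_insert_self _ _) (h ▸ mem_insert_self _ _)
    have h₁ : SymbolDisjoint a (y :: b) := by
      rw [SymbolDisjoint, symbols_cons]; exact hab.mono_left (subset_insert _ _)
    have h₂ : SymbolDisjoint (x :: a) b := by
      rw [SymbolDisjoint, symbols_cons]; exact hab.mono_right (subset_insert _ _)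
    rw [truncFQ_cons_mul_truncFQ_cons B prev hxy, shuffles, Multiset.map_add, Multiset.sum_add,
      Multiset.map_map, Multiset.map_map, Function.comp_def, Function.comp_def,
      sum_map_truncFQ_cons, sum_map_truncFQ_cons]
    simp only [ih₁ _ h₁, ih₂ _ h₂]

lemma coeff_truncFQ (prev : Option (ℕ × (ℕ × ℕ))) (c : CPerm) (m : (ℕ × ℕ) →₀ ℕ) :
    coeff m (truncFQ B prev c : MvPolynomial _ R) =
      #{w ∈ Fintype.piFinset (fun _ => Icc 1 B) | IsLabelling prev c w ∧ labelMonomial c w = m} := by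
  rw [truncFQ, coeff_sum]
  simp [coeff_monomial, sum_boole, filter_filter]

lemma coeff_FQ_eq_coeff_truncFQ {c : CPerm} (hc : (c.map Prod.fst).Nodup) {m : (ℕ × ℕ) →₀ ℕ}
    (hB : monBound m ≤ B) :
    MvPowerSeries.coeff m (FQ c) = coeff m (truncFQ B none c : MvPolynomial _ ℚ) := by
  rw [coeff_truncFQ]
  refine congrArg Nat.cast (Finset.card_nbij' (fun v j => (v j : ℕ))
    (fun w j => ⟨min (w j) (monBound m), by omega⟩) ?_ ?_ ?_ ?_)
  · intro v hv
    simp only [coe_filter, mem_univ, true_and, Set.mem_ofPred_eq] at hv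
    obtain ⟨h₁, h₂, h₃, h₄⟩ := hv
    simp only [coe_filter, Fintype.mem_piFinset, mem_Icc, Set.mem_ofPred_eq]
    exact ⟨fun j => ⟨h₁ j, (v j).is_le.trans hB⟩, (isLabelling_none_iff hc _).2 ⟨h₂, h₃⟩, h₄⟩
  · intro w hw
    simp only [coe_filter, Fintype.mem_piFinset, mem_Icc, Set.mem_ofPred_eq] at hw
    obtain ⟨hw, hlab, hmon⟩ := hw
    have hval : ∀ j, min (w j) (monBound m) = w j := fun j =>
      min_eq_left (le_monBound_of_labelMonomial_eq hmon j)
    obtain ⟨h₂, h₃⟩ := (isLabelling_none_iff hc w).1 hlab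
    simp only [coe_filter, mem_univ, true_and, Set.mem_ofPred_eq, hval]
    exact ⟨fun j => (hw j).1, h₂, h₃, hmon⟩
  · intro v _
    funext j
    exact Fin.ext (min_eq_left (v j).is_le)
  · intro w hw
    simp only [coe_filter, Fintype.mem_piFinset, mem_Icc, Set.mem_ofPred_eq] at hw
    funext j
    exact min_eq_left (le_monBound_of_labelMonomial_eq hw.2.2 j)

end

lemma perm_append_of_mem_shuffles {α : Type*} {a b c : List α} (h : c ∈ shuffles a b) :
    c.Perm (a ++ b) := by
  induction a, b using shuffles.induct generalizing c with
  | case1 b => simp_all [shuffles]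
  | case2 x a => simp_all [shuffles]
  | case3 x a y b ih₁ ih₂ =>
    rw [shuffles, Multiset.mem_add, Multiset.mem_map, Multiset.mem_map] at h
    rcases h with ⟨c, hc, rfl⟩ | ⟨c, hc, rfl⟩
    · exact (ih₁ hc).cons x
    · exact ((ih₂ hc).cons y).trans List.perm_middle.symm

lemma nodup_symbols_of_mem_shuffles {a b c : CPerm} (ha : (a.map Prod.fst).Nodup)
    (hb : (b.map Prod.fst).Nodup) (hd : SymbolDisjoint a b) (hc : c ∈ shuffles a b) :
    (c.map Prod.fst).Nodup := by
  rw [((perm_append_of_mem_shuffles hc).map Prod.fst).nodup_iff, List.map_append,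
    List.nodup_append]
  exact ⟨ha, hb, fun s hs t ht hst => List.disjoint_toFinset_iff_disjoint.1 hd hs (hst ▸ ht)⟩

theorem FQ_mul_FQ_general (a b : CPerm)
    (ha : IsCPerm a) (hb : IsCPerm b)
    (hd : SymbolDisjoint a b) :
    FQ a * FQ b = ((shuffles a b).map FQ).sum := by
  ext m
  have hcoeff {c : CPerm} (hc : (c.map Prod.fst).Nodup) {p : (ℕ × ℕ) →₀ ℕ} (hp : p ≤ m) :=
    coeff_FQ_eq_coeff_truncFQ (monBound m) hc (monBound_mono hp)
  calc MvPowerSeries.coeff m (FQ a * FQ b)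
      = MvPolynomial.coeff m (truncFQ (monBound m) none a * truncFQ (monBound m) none b) := by
        rw [MvPowerSeries.coeff_mul, MvPolynomial.coeff_mul]
        refine Finset.sum_congr rfl fun p hp => ?_
        rw [Finset.HasAntidiagonal.mem_antidiagonal] at hp
        rw [hcoeff ha.1 (hp ▸ le_self_add), hcoeff hb.1 (hp ▸ le_add_self)]
    _ = ((shuffles a b).map fun c =>
          MvPolynomial.coeff m (truncFQ (monBound m) none c : MvPolynomial _ ℚ)).sum := by
        rw [truncFQ_mul_truncFQ _ _ _ _ hd]
        change MvPolynomial.coeffAddMonoidHom m _ = _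
        rw [map_multiset_sum, Multiset.map_map]
        rfl
    _ = MvPowerSeries.coeff m ((shuffles a b).map FQ).sum := by
        rw [map_multiset_sum, Multiset.map_map]
        refine congrArg Multiset.sum (Multiset.map_congr rfl fun c hc => ?_)
        exact (hcoeff (nodup_symbols_of_mem_shuffles ha.1 hb.1 hd hc) le_rfl).symm

/-- **Theorem.** For symbol-disjoint `r`-coloured permutations `a` and `b`:
`F_a · F_b = Σ_{c ∈ a⧢b} F_c`. -/
theorem FQ_mul_FQ (r : ℕ) (hr : 1 ≤ r) (a b : CPerm)
    (ha : IsCPerm a) (hb : IsCPerm b)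
    (hra : RColoured r a) (hrb : RColoured r b)
    (hd : SymbolDisjoint a b) :
    FQ a * FQ b = ((shuffles a b).map FQ).sum :=
  FQ_mul_FQ_general a b ha hb hd
end
end
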